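/- arXiv:2204.08850 — 3 statements merged into one kernel-verified Lean document; each statement's English description precedes it below -/
import Mathlib

section
/- Let (X,r) be a finite nondegenerate involutive quadratic set with |X| = n such that r is 2-cancellative. Then for every x ∈ X there exists a unique y ∈ X with r(x,y) = (x,y); consequently the set F(X,r) = {(x,y) ∈ X² : r(x,y) = (x,y)} of r-fixed points has cardinality exactly n. -/
/-! Left nondegeneracy gives, for each `x`, a `y` with `λ_x(y) = x`, so `r (x, y) = (x, w)` for
some `w`. Applying the involution `r` gives `r (x, w) = (x, y)`, so `λ_x(w) = x = λ_x(y)` and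
injectivity of `λ_x` forces `w = y`; injectivity also makes this `y` unique. The fixed points are
therefore the graph of a function `X → X`, and projecting to the first coordinate counts them. -/

theorem existsUnique_apply_eq_self_of_involutive {X : Type*} {r : X × X → X × X}
    (hinv : Function.Involutive r) {x : X} (hx : Function.Bijective fun y => (r (x, y)).1) :
    ∃! y : X, r (x, y) = (x, y) := by
  obtain ⟨y, hy⟩ := hx.2 x
  obtain ⟨w, hr⟩ : ∃ w, r (x, y) = (x, w) := ⟨_, Prod.ext hy rfl⟩
  have hback : r (x, w) = (x, y) := by rw [← hr, hinv]
  have hw : w = y := hx.1 (by simp only [hback, hr])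
  refine ⟨y, hw ▸ hr, fun y' hy' => hx.1 ?_⟩
  simp only [hy', hr]

theorem bijective_fst_of_existsUnique {X Y : Type*} {P : X × Y → Prop}
    (h : ∀ x, ∃! y, P (x, y)) : Function.Bijective fun p : {p : X × Y // P p} => p.1.1 := by
  refine ⟨?_, fun x => ⟨⟨(x, (h x).exists.choose), (h x).exists.choose_spec⟩, rfl⟩⟩
  rintro ⟨⟨a, b⟩, hab⟩ ⟨⟨a', b'⟩, hab'⟩ (rfl : a = a')
  simp only [Subtype.mk.injEq, Prod.mk.injEq, true_and]
  exact (h a).unique hab hab'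

theorem stmt_3_general {X : Type*} [Fintype X] (n : ℕ) (hn : Fintype.card X = n)
    (r : X × X → X × X)
    (hndl : ∀ x : X, Function.Bijective fun y => (r (x, y)).1)
    (hinv : Function.Involutive r) :
    (∀ x : X, ∃! y : X, r (x, y) = (x, y)) ∧
    Nat.card {p : X × X // r p = p} = n := by
  have hfix : ∀ x : X, ∃! y : X, r (x, y) = (x, y) := fun x =>
    existsUnique_apply_eq_self_of_involutive hinv (hndl x)
  refine ⟨hfix, ?_⟩
  rw [Nat.card_congr (Equiv.ofBijective _ (bijective_fst_of_existsUnique hfix)),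
    Nat.card_eq_fintype_card, hn]

/-- In a finite nondegenerate involutive 2-cancellative quadratic set of order `n`,
for every `x` there is a unique `y` with `r (x, y) = (x, y)`, and the set of
`r`-fixed points has cardinality exactly `n`. -/
theorem stmt_3 {X : Type*} [Fintype X] (n : ℕ) (hn : Fintype.card X = n)
    (r : X × X → X × X)
    (hbij : Function.Bijective r)
    (hndl : ∀ x : X, Function.Bijective fun y => (r (x, y)).1)
    (hndr : ∀ y : X, Function.Bijective fun x => (r (x, y)).2)
    (hinv : Function.Involutive r)
    (hcanc : ∀ a b c c' d d' : X,
      r (c, a) = (d, b) → r (c', a) = (d', b) → c = c' ∧ d = d') :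
    (∀ x : X, ∃! y : X, r (x, y) = (x, y)) ∧
    Nat.card {p : X × X // r p = p} = n :=
  stmt_3_general n hn r hndl hinv
end

section
/- Let (X,r) be a finite square-free nondegenerate involutive solution of the YBE with |X| = n ≥ 2, let d ≥ 2, and let (S_d, r_d) be the monomial d-Veronese solution induced on the degree-d component of the braided monoid S(X,r). If (S_d, r_d) is square-free, then (X,r) is the trivial solution (r(x,y) = (y,x) for all x,y). Conversely, if (X,r) is trivial then (S_d,r_d) is square-free. -/
/-- `r¹² = r × id`. -/
def rOne {X : Type*} (r : X × X → X × X) : X × X × X → X × X × X :=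
  fun p => ((r (p.1, p.2.1)).1, (r (p.1, p.2.1)).2, p.2.2)

/-- `r²³ = id × r`. -/
def rTwo {X : Type*} (r : X × X → X × X) : X × X × X → X × X × X :=
  fun p => (p.1, r p.2)

/-- The defining relations `xy = (ˣy)(x^y)` of the monoid `S(X,r)`. -/
def ybRel {X : Type*} (r : X × X → X × X) :
    FreeMonoid X → FreeMonoid X → Prop := fun a b =>
  ∃ x y : X, a = FreeMonoid.of x * FreeMonoid.of y ∧
    b = FreeMonoid.of (r (x, y)).1 * FreeMonoid.of (r (x, y)).2

/-- The congruence on the free monoid generated by the Yang-Baxter relations;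
`S(X,r)` is its quotient. -/
def ybCon {X : Type*} (r : X × X → X × X) : Con (FreeMonoid X) := conGen (ybRel r)

/-- `s` is an element of degree `k` of `S(X,r)`. -/
def ybDeg {X : Type*} (r : X × X → X × X) (s : (ybCon r).Quotient) (k : ℕ) : Prop :=
  ∃ w : FreeMonoid X, FreeMonoid.length w = k ∧ (ybCon r).mk' w = s

namespace Stmt16Aux

variable {X : Type*} (r : X × X → X × X)

def lam (x y : X) : X := (r (x, y)).1
def rho (x y : X) : X := (r (x, y)).2

lemma r_eq (x y : X) : r (x, y) = (lam r x y, rho r x y) := rfl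

/-- cyclic condition C2 -/
lemma C2 (hbraid : rOne r ∘ rTwo r ∘ rOne r = rTwo r ∘ rOne r ∘ rTwo r)
    (hsf : ∀ x : X, r (x, x) = (x, x))
    (hndr : ∀ y : X, Function.Bijective fun x => (r (x, y)).2)
    (x z : X) : rho r x (lam r x z) = rho r x z := by
  have h := congrArg (fun t => t.2.2) (congrFun hbraid (x, x, z))
  simp only [Function.comp_apply, rOne, rTwo, hsf, lam, rho] at h ⊢
  -- h should say : (r (x,z)).2 = (r ((r (x, (r (x,z)).1)).2, (r (x,z)).2)).2
  have hinj := (hndr ((r (x, z)).2)).injective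
  apply hinj
  have h2 : (r ((r (x, z)).2, (r (x, z)).2)).2 = (r (x, z)).2 := by rw [hsf]
  simp only [h2]
  exact h.symm

/-- `r (x, λ_x^[k] y) = (λ_x^[k+1] y, x^y)` -/
lemma Lpow (hbraid : rOne r ∘ rTwo r ∘ rOne r = rTwo r ∘ rOne r ∘ rTwo r)
    (hsf : ∀ x : X, r (x, x) = (x, x))
    (hndr : ∀ y : X, Function.Bijective fun x => (r (x, y)).2)
    (x y : X) : ∀ k : ℕ, r (x, (lam r x)^[k] y) = ((lam r x)^[k+1] y, rho r x y) := by
  intro k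
  induction k with
  | zero => rfl
  | succ k ih =>
    have h2 : rho r x ((lam r x)^[k] y) = rho r x y := (Prod.ext_iff.mp ih).2
    have h1 : (lam r x)^[k+1] y = lam r x ((lam r x)^[k] y) :=
      Function.iterate_succ_apply' (lam r x) k y
    refine Prod.ext ?_ ?_
    · show lam r x ((lam r x)^[k+1] y) = (lam r x)^[k+1+1] y
      rw [Function.iterate_succ_apply' (lam r x) (k+1) y]
    · show rho r x ((lam r x)^[k+1] y) = rho r x y
      rw [h1, C2 r hbraid hsf hndr, h2]

/-- left action of a letter on a word -/
def Lw : X → List X → List X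
  | _, [] => []
  | x, y :: v => lam r x y :: Lw (rho r x y) v

/-- left action of a word on a word -/
def Lword : List X → List X → List X
  | [], v => v
  | x :: u, v => Lw r x (Lword u v)

/-- iterated first-component action -/
def ell : List X → X → X
  | [], y => y
  | x :: u, y => lam r x (ell u y)

lemma ell_append (u v : List X) (t : X) : ell r (u ++ v) t = ell r u (ell r v t) := by
  induction u with
  | nil => rfl
  | cons a u ih => simp [ell, ih]

lemma ell_replicate (x t : X) (k : ℕ) : ell r (List.replicate k x) t = (lam r x)^[k] t := by
  induction k with
  | zero => rfl
  | succ k ih => simp [List.replicate_succ, ell, ih, Function.iterate_succ_apply']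

lemma Lword_head (u : List X) (y : X) (v : List X) :
    ∃ v', Lword r u (y :: v) = ell r u y :: v' := by
  induction u generalizing y v with
  | nil => exact ⟨v, rfl⟩
  | cons a u ih =>
    obtain ⟨v', hv'⟩ := ih y v
    exact ⟨Lw r (rho r a (ell r u y)) v', by simp [Lword, hv', Lw, ell]⟩

/-- one rewriting step -/
def ybStep : FreeMonoid X → FreeMonoid X → Prop := fun v v' =>
  ∃ (p q : List X) (a b : X), v = FreeMonoid.ofList (p ++ a :: b :: q) ∧
    v' = FreeMonoid.ofList (p ++ lam r a b :: rho r a b :: q)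

lemma ybStep_mul_left (u : FreeMonoid X) {v v' : FreeMonoid X} (h : ybStep r v v') :
    ybStep r (u * v) (u * v') := by
  obtain ⟨p, q, a, b, h1, h2⟩ := h
  refine ⟨FreeMonoid.toList u ++ p, q, a, b, ?_, ?_⟩
  · rw [h1]; show FreeMonoid.ofList (FreeMonoid.toList u ++ (p ++ a :: b :: q)) = _
    rw [List.append_assoc]
  · rw [h2]; show FreeMonoid.ofList (FreeMonoid.toList u ++ (p ++ _ :: _ :: q)) = _
    rw [List.append_assoc]

lemma ybStep_mul_right (u : FreeMonoid X) {v v' : FreeMonoid X} (h : ybStep r v v') :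
    ybStep r (v * u) (v' * u) := by
  obtain ⟨p, q, a, b, h1, h2⟩ := h
  refine ⟨p, q ++ FreeMonoid.toList u, a, b, ?_, ?_⟩
  · rw [h1]; show FreeMonoid.ofList ((p ++ a :: b :: q) ++ FreeMonoid.toList u) = _
    simp [List.append_assoc]
  · rw [h2]; show FreeMonoid.ofList ((p ++ _ :: _ :: q) ++ FreeMonoid.toList u) = _
    simp [List.append_assoc]

lemma eqvGen_mul_left (u : FreeMonoid X) {v v' : FreeMonoid X}
    (h : Relation.EqvGen (ybStep r) v v') :
    Relation.EqvGen (ybStep r) (u * v) (u * v') := by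
  induction h with
  | rel _ _ h => exact Relation.EqvGen.rel _ _ (ybStep_mul_left r u h)
  | refl _ => exact Relation.EqvGen.refl _
  | symm _ _ _ ih => exact ih.symm _ _
  | trans _ _ _ _ _ ih1 ih2 => exact ih1.trans _ _ _ ih2

lemma eqvGen_mul_right (u : FreeMonoid X) {v v' : FreeMonoid X}
    (h : Relation.EqvGen (ybStep r) v v') :
    Relation.EqvGen (ybStep r) (v * u) (v' * u) := by
  induction h with
  | rel _ _ h => exact Relation.EqvGen.rel _ _ (ybStep_mul_right r u h)
  | refl _ => exact Relation.EqvGen.refl _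
  | symm _ _ _ ih => exact ih.symm _ _
  | trans _ _ _ _ _ ih1 ih2 => exact ih1.trans _ _ _ ih2

/-- the congruence generated by single rewriting steps -/
def ybE : Con (FreeMonoid X) where
  r := Relation.EqvGen (ybStep r)
  iseqv := Relation.EqvGen.is_equivalence _
  mul' := by
    intro w x y z h1 h2
    exact ((eqvGen_mul_right r y h1).trans _ _ _ (eqvGen_mul_left r x h2))

lemma ybCon_le_ybE : conGen (ybRel r) ≤ ybE r := by
  apply Con.conGen_le.2
  rintro v v' ⟨x, y, hv, hv'⟩
  apply Relation.EqvGen.rel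
  exact ⟨[], [], x, y, by simpa using hv, by simpa [lam, rho] using hv'⟩

lemma ybStep_symm (hinv : Function.Involutive r) {v v' : FreeMonoid X}
    (h : ybStep r v v') : ybStep r v' v := by
  obtain ⟨p, q, a, b, h1, h2⟩ := h
  refine ⟨p, q, lam r a b, rho r a b, h2, ?_⟩
  have : r (lam r a b, rho r a b) = (a, b) := by
    have := hinv (a, b)
    rwa [r_eq r a b] at this
  rw [h1, show lam r (lam r a b) (rho r a b) = a from congrArg Prod.fst this,
    show rho r (lam r a b) (rho r a b) = b from congrArg Prod.snd this]

/-- the invariant class shape: `x^i (λ_x^k y) (x^y)^k` -/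
lemma stepQ (hbraid : rOne r ∘ rTwo r ∘ rOne r = rTwo r ∘ rOne r ∘ rTwo r)
    (hsf : ∀ x : X, r (x, x) = (x, x))
    (hinv : Function.Involutive r)
    (hndr : ∀ y : X, Function.Bijective fun x => (r (x, y)).2)
    (x y : X) :
    ∀ (p : List X) (i k : ℕ) (q : List X) (a b : X),
      List.replicate i x ++ ((lam r x)^[k] y) :: List.replicate k (rho r x y)
        = p ++ a :: b :: q →
      ∃ i' k', i' + k' = i + k ∧
        p ++ lam r a b :: rho r a b :: q
          = List.replicate i' x ++ ((lam r x)^[k'] y) :: List.replicate k' (rho r x y) := by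
  intro p
  induction p with
  | nil =>
    intro i k q a b heq
    match i, heq with
    | 0, heq =>
      simp only [List.replicate, List.nil_append] at heq
      match k, heq with
      | (k+1), heq =>
        rw [List.replicate_succ] at heq
        obtain ⟨ha, hb, hq⟩ : (lam r x)^[k+1] y = a ∧ rho r x y = b ∧ List.replicate k (rho r x y) = q := by
          simpa using heq
        have hr : r (a, b) = (x, (lam r x)^[k] y) := by
          rw [← ha, ← hb]
          have := hinv (x, (lam r x)^[k] y)
          rwa [Lpow r hbraid hsf hndr x y k] at this
        refine ⟨1, k, by omega, ?_⟩
        rw [show lam r a b = x from (Prod.ext_iff.mp hr).1,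
          show rho r a b = (lam r x)^[k] y from (Prod.ext_iff.mp hr).2, ← hq]
        simp [List.replicate_succ]
    | 1, heq =>
      simp only [List.replicate_succ, List.replicate, List.nil_append, List.cons_append] at heq
      obtain ⟨ha, hb, hq⟩ : x = a ∧ (lam r x)^[k] y = b ∧ List.replicate k (rho r x y) = q := by
        simpa using heq
      have hr : r (a, b) = ((lam r x)^[k+1] y, rho r x y) := by
        rw [← ha, ← hb]; exact Lpow r hbraid hsf hndr x y k
      refine ⟨0, k + 1, by omega, ?_⟩
      rw [show lam r a b = (lam r x)^[k+1] y from (Prod.ext_iff.mp hr).1,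
        show rho r a b = rho r x y from (Prod.ext_iff.mp hr).2, ← hq]
      simp [List.replicate_succ]
    | (i+2), heq =>
      rw [List.replicate_succ, List.replicate_succ] at heq
      obtain ⟨ha, hb, hq⟩ : x = a ∧ x = b ∧
          List.replicate i x ++ ((lam r x)^[k] y) :: List.replicate k (rho r x y) = q := by
        simpa using heq
      refine ⟨i + 2, k, rfl, ?_⟩
      rw [← ha, ← hb, show lam r x x = x from (Prod.ext_iff.mp (hsf x)).1,
        show rho r x x = x from (Prod.ext_iff.mp (hsf x)).2, ← hq]
      simp [List.replicate_succ]
  | cons e p ih =>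
    intro i k q a b heq
    match i, heq with
    | 0, heq =>
      simp only [List.replicate, List.nil_append, List.cons_append] at heq
      obtain ⟨he, hrest⟩ : (lam r x)^[k] y = e ∧ List.replicate k (rho r x y) = p ++ a :: b :: q := by
        simpa using heq
      have ha : a = rho r x y :=
        List.eq_of_mem_replicate (by rw [hrest]; simp)
      have hb : b = rho r x y :=
        List.eq_of_mem_replicate (by rw [hrest]; simp)
      have hc := hsf (rho r x y)
      subst ha; subst hb
      refine ⟨0, k, rfl, ?_⟩
      rw [show lam r (rho r x y) (rho r x y) = rho r x y from (Prod.ext_iff.mp hc).1,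
        show rho r (rho r x y) (rho r x y) = rho r x y from (Prod.ext_iff.mp hc).2]
      show e :: (p ++ rho r x y :: rho r x y :: q) = _
      rw [← hrest, ← he]
      simp [List.replicate]
    | (i+1), heq =>
      rw [List.replicate_succ] at heq
      obtain ⟨he, hrest⟩ : x = e ∧
          List.replicate i x ++ ((lam r x)^[k] y) :: List.replicate k (rho r x y) = p ++ a :: b :: q := by
        simpa using heq
      obtain ⟨i', k', hik, hres⟩ := ih i k q a b hrest
      refine ⟨i' + 1, k', by omega, ?_⟩
      rw [← he]
      show x :: (p ++ lam r a b :: rho r a b :: q) = _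
      rw [hres, List.replicate_succ]
      simp

lemma step_pres (hbraid : rOne r ∘ rTwo r ∘ rOne r = rTwo r ∘ rOne r ∘ rTwo r)
    (hsf : ∀ x : X, r (x, x) = (x, x))
    (hinv : Function.Involutive r)
    (hndr : ∀ y : X, Function.Bijective fun x => (r (x, y)).2)
    (x y : X) (m : ℕ) {u v : FreeMonoid X} (h : ybStep r u v)
    (hu : ∃ i k, i + k = m ∧ FreeMonoid.toList u
      = List.replicate i x ++ ((lam r x)^[k] y) :: List.replicate k (rho r x y)) :
    ∃ i k, i + k = m ∧ FreeMonoid.toList v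
      = List.replicate i x ++ ((lam r x)^[k] y) :: List.replicate k (rho r x y) := by
  obtain ⟨i, k, hik, hsh⟩ := hu
  obtain ⟨p, q, a, b, hu', hv'⟩ := h
  have h0 : List.replicate i x ++ ((lam r x)^[k] y) :: List.replicate k (rho r x y)
      = p ++ a :: b :: q := by
    rw [← hsh, hu', FreeMonoid.toList_ofList]
  obtain ⟨i', k', hik', hres⟩ := stepQ r hbraid hsf hinv hndr x y p i k q a b h0
  exact ⟨i', k', by omega, by rw [hv', FreeMonoid.toList_ofList]; exact hres⟩

lemma eqv_invariant (hbraid : rOne r ∘ rTwo r ∘ rOne r = rTwo r ∘ rOne r ∘ rTwo r)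
    (hsf : ∀ x : X, r (x, x) = (x, x))
    (hinv : Function.Involutive r)
    (hndr : ∀ y : X, Function.Bijective fun x => (r (x, y)).2)
    (x y : X) (m : ℕ) {u v : FreeMonoid X}
    (h : Relation.EqvGen (ybStep r) u v) :
    (∃ i k, i + k = m ∧ FreeMonoid.toList u
      = List.replicate i x ++ ((lam r x)^[k] y) :: List.replicate k (rho r x y)) ↔
    (∃ i k, i + k = m ∧ FreeMonoid.toList v
      = List.replicate i x ++ ((lam r x)^[k] y) :: List.replicate k (rho r x y)) := by
  induction h with
  | rel a b hab =>
    exact ⟨step_pres r hbraid hsf hinv hndr x y m hab,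
      step_pres r hbraid hsf hinv hndr x y m (ybStep_symm r hinv hab)⟩
  | refl _ => exact Iff.rfl
  | symm _ _ _ ih => exact ih.symm
  | trans _ _ _ _ _ ih1 ih2 => exact ih1.trans ih2

end Stmt16Aux

open Stmt16Aux

/-- Theorem (square-free monomial Veronese solutions): for a finite square-free
nondegenerate involutive solution `(X,r)` with `n ≥ 2` and `d ≥ 2`, the monomial
`d`-Veronese solution `(S_d, r_d)` induced by the braided monoid `(S, r_S)`
(here given by the M3-actions `lact a u = ^a u`, `ract a u = a^u`) is square-free
iff `(X,r)` is the trivial solution. -/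
theorem stmt_16 {X : Type*} [Fintype X] (n d : ℕ) (hn : Fintype.card X = n)
    (hn2 : 2 ≤ n) (hd : 2 ≤ d)
    (r : X × X → X × X)
    (hbij : Function.Bijective r)
    (hndl : ∀ x : X, Function.Bijective fun y => (r (x, y)).1)
    (hndr : ∀ y : X, Function.Bijective fun x => (r (x, y)).2)
    (hinv : Function.Involutive r)
    (hbraid : rOne r ∘ rTwo r ∘ rOne r = rTwo r ∘ rOne r ∘ rTwo r)
    (hsf : ∀ x : X, r (x, x) = (x, x))
    (lact ract : (ybCon r).Quotient → (ybCon r).Quotient → (ybCon r).Quotient)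
    -- M3-monoid conditions on the extended actions
    (hML0 : ∀ a, lact a 1 = 1) (hML0' : ∀ u, lact 1 u = u)
    (hMR0 : ∀ u, ract 1 u = 1) (hMR0' : ∀ a, ract a 1 = a)
    (hML1 : ∀ a b u, lact (a * b) u = lact a (lact b u))
    (hMR1 : ∀ a u v, ract a (u * v) = ract (ract a u) v)
    (hML2 : ∀ a u v, lact a (u * v) = lact a u * lact (ract a u) v)
    (hMR2 : ∀ a b u, ract (a * b) u = ract a (lact b u) * ract b u)
    (hM3 : ∀ u v, lact u v * ract u v = u * v)
    -- the actions restrict to `r` on `X`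
    (hcl : ∀ x y : X, lact ((ybCon r).mk' (FreeMonoid.of x)) ((ybCon r).mk' (FreeMonoid.of y))
      = (ybCon r).mk' (FreeMonoid.of (r (x, y)).1))
    (hcr : ∀ x y : X, ract ((ybCon r).mk' (FreeMonoid.of x)) ((ybCon r).mk' (FreeMonoid.of y))
      = (ybCon r).mk' (FreeMonoid.of (r (x, y)).2))
    -- the actions respect the grading: `|^a u| = |u| = |u^a|`
    (hgl : ∀ a u k, ybDeg r u k → ybDeg r (lact a u) k)
    (hgr : ∀ a u k, ybDeg r a k → ybDeg r (ract a u) k) :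
    (∀ a : (ybCon r).Quotient, ybDeg r a d → lact a a = a ∧ ract a a = a) ↔
    (∀ x y : X, r (x, y) = (y, x)) := by
  have hofc : ∀ (c : X) (l : List X),
      FreeMonoid.ofList (c :: l) = FreeMonoid.of c * FreeMonoid.ofList l := fun _ _ => rfl
  have hofn : FreeMonoid.ofList ([] : List X) = 1 := rfl
  constructor
  · -- square-free Veronese implies trivial solution
    intro hSF
    -- action of a single letter on a word
    have hLw : ∀ (x : X) (v : List X),
        lact ((ybCon r).mk' (FreeMonoid.of x)) ((ybCon r).mk' (FreeMonoid.ofList v))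
          = (ybCon r).mk' (FreeMonoid.ofList (Lw r x v)) := by
      intro x v
      induction v generalizing x with
      | nil => rw [hofn, map_one, hML0]; exact (map_one _).symm
      | cons y v ih =>
        rw [hofc, map_mul, hML2, hcl, hcr, ih ((r (x, y)).2)]
        rw [show Lw r x (y :: v) = lam r x y :: Lw r (rho r x y) v from rfl, hofc, map_mul]
        rfl
    have hLword : ∀ (u v : List X),
        lact ((ybCon r).mk' (FreeMonoid.ofList u)) ((ybCon r).mk' (FreeMonoid.ofList v))
          = (ybCon r).mk' (FreeMonoid.ofList (Lword r u v)) := by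
      intro u
      induction u with
      | nil => intro v; rw [hofn, map_one, hML0']; rfl
      | cons a u ih =>
        intro v
        rw [hofc, map_mul, hML1, ih, hLw]
        rfl
    have key : ∀ x y : X, lam r y x = x := by
      intro x y
      obtain ⟨m', hm'⟩ : ∃ m', d - 1 = m' + 1 := ⟨d - 2, by omega⟩
      set m : ℕ := m' + 1 with hmdef
      set w : List X := List.replicate m x ++ [y] with hw
      have hdeg : ybDeg r ((ybCon r).mk' (FreeMonoid.ofList w)) d :=
        ⟨FreeMonoid.ofList w, by
          show w.length = d
          rw [hw]; simp; omega, rfl⟩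
      have hEq : (ybCon r).mk' (FreeMonoid.ofList (Lword r w w))
          = (ybCon r).mk' (FreeMonoid.ofList w) := by
        rw [← hLword]; exact (hSF _ hdeg).1
      have hCon : ybCon r (FreeMonoid.ofList (Lword r w w)) (FreeMonoid.ofList w) :=
        ((ybCon r).eq).mp hEq
      have hE : Relation.EqvGen (ybStep r) (FreeMonoid.ofList (Lword r w w))
          (FreeMonoid.ofList w) := ybCon_le_ybE r hCon
      have hQw : ∃ i k, i + k = m ∧ FreeMonoid.toList (FreeMonoid.ofList w)
          = List.replicate i x ++ ((lam r x)^[k] y) :: List.replicate k (rho r x y) :=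
        ⟨m, 0, by omega, by simp [hw]⟩
      obtain ⟨i, k, hik, hsh⟩ :=
        (eqv_invariant r hbraid hsf hinv hndr x y m hE).mpr hQw
      rw [FreeMonoid.toList_ofList] at hsh
      -- compute the head of `Lword w w`
      have hwcons : w = x :: (List.replicate m' x ++ [y]) := by
        rw [hw, hmdef, List.replicate_succ]; rfl
      obtain ⟨v', hv'⟩ := Lword_head r w x (List.replicate m' x ++ [y])
      have hL : Lword r w w = ell r w x :: v' := by
        rw [show Lword r w w = Lword r w (x :: (List.replicate m' x ++ [y])) from by
          rw [← hwcons], hv']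
      have hellw : ell r w x = (lam r x)^[m] (lam r y x) := by
        rw [hw, ell_append, ell_replicate]
        rfl
      rw [hL, hellw] at hsh
      have hinjx : Function.Injective ((lam r x)^[m]) :=
        Function.Injective.iterate (hndl x).injective m
      have hfixx : (lam r x)^[m] x = x :=
        Function.iterate_fixed ((Prod.ext_iff.mp (hsf x)).1) m
      cases i with
      | zero =>
        have hk : k = m := by omega
        rw [hk] at hsh
        have hhead : (lam r x)^[m] (lam r y x) = (lam r x)^[m] y := by
          have := congrArg (fun l => l.head?) hsh
          simpa using this
        have hxy : lam r y x = y := hinjx hhead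
        have hx_eq_y : x = y := (hndl y).injective (by
          show lam r y x = lam r y y
          rw [hxy]
          exact ((Prod.ext_iff.mp (hsf y)).1).symm)
        rw [hx_eq_y]
        exact (Prod.ext_iff.mp (hsf y)).1
      | succ i' =>
        have hhead : (lam r x)^[m] (lam r y x) = x := by
          have := congrArg (fun l => l.head?) hsh
          rw [List.replicate_succ] at this
          simpa using this
        exact hinjx (hhead.trans hfixx.symm)
    intro x y
    have h1 : (r (x, y)).1 = y := key y x
    have h2 : (r (x, y)).2 = x := by
      have h := hinv (x, y)
      rw [r_eq r x y] at h
      have hc1 : lam r (lam r x y) (rho r x y) = x := (Prod.ext_iff.mp h).1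
      rw [key (rho r x y) (lam r x y)] at hc1
      exact hc1
    exact Prod.ext h1 h2
  · -- trivial solution implies square-free Veronese
    intro htriv
    have hlam : ∀ x y : X, (r (x, y)).1 = y := fun x y => by rw [htriv]
    have hrho : ∀ x y : X, (r (x, y)).2 = x := fun x y => by rw [htriv]
    have hLgen : ∀ (l : List X) (y : X),
        lact ((ybCon r).mk' (FreeMonoid.ofList l)) ((ybCon r).mk' (FreeMonoid.of y))
          = (ybCon r).mk' (FreeMonoid.of y) := by
      intro l y
      induction l with
      | nil => rw [hofn, map_one]; exact hML0' _
      | cons c l ih => rw [hofc, map_mul, hML1, ih, hcl, hlam]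
    have hLgen' : ∀ (a : (ybCon r).Quotient) (y : X),
        lact a ((ybCon r).mk' (FreeMonoid.of y)) = (ybCon r).mk' (FreeMonoid.of y) := by
      intro a y
      refine Con.induction_on a fun w => ?_
      exact hLgen (FreeMonoid.toList w) y
    have hRgen : ∀ (l : List X) (y : X),
        ract ((ybCon r).mk' (FreeMonoid.ofList l)) ((ybCon r).mk' (FreeMonoid.of y))
          = (ybCon r).mk' (FreeMonoid.ofList l) := by
      intro l y
      induction l with
      | nil => rw [hofn, map_one]; exact hMR0 _
      | cons c l ih =>
        rw [hofc, map_mul, hMR2, ih, hLgen l y, hcr, hrho]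
    have hRgen' : ∀ (a : (ybCon r).Quotient) (y : X),
        ract a ((ybCon r).mk' (FreeMonoid.of y)) = a := by
      intro a y
      refine Con.induction_on a fun w => ?_
      exact hRgen (FreeMonoid.toList w) y
    have hLall : ∀ (l : List X) (a : (ybCon r).Quotient),
        lact a ((ybCon r).mk' (FreeMonoid.ofList l)) = (ybCon r).mk' (FreeMonoid.ofList l) := by
      intro l
      induction l with
      | nil => intro a; rw [hofn, map_one]; exact hML0 a
      | cons y l ih =>
        intro a
        rw [hofc, map_mul, hML2, hLgen' a y, ih]
    have hRall : ∀ (l : List X) (a : (ybCon r).Quotient),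
        ract a ((ybCon r).mk' (FreeMonoid.ofList l)) = a := by
      intro l
      induction l with
      | nil => intro a; rw [hofn, map_one]; exact hMR0' a
      | cons y l ih =>
        intro a
        rw [hofc, map_mul, hMR1, hRgen' a y, ih]
    intro a _
    constructor
    · exact Con.induction_on a fun w => hLall (FreeMonoid.toList w) _
    · exact Con.induction_on a fun w => hRall (FreeMonoid.toList w) _
end

section
/- Let (X,r) be a finite nondegenerate involutive solution of the YBE of order n with Yang-Baxter algebra A = k⟨X⟩/(R₀) over a field k, graded by length, and let d ≥ 2. Then the d-Veronese subalgebra A^(d) = ⊕_{m≥0} A_{md} is a quadratic algebra with N = C(n+d-1,d) generators of degree one (the degree-d component A_d), and any set of linearly independent quadratic defining relations for A^(d) has cardinality N² − C(n+2d-1, n-1). -/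
/-- Degrees add under multiplication in `S(X,r)`. -/
lemma ybDeg_mul {X : Type*} (r : X × X → X × X) {a b : (ybCon r).Quotient} {p q : ℕ}
    (ha : ybDeg r a p) (hb : ybDeg r b q) : ybDeg r (a * b) (p + q) := by
  obtain ⟨wa, hwa, rfl⟩ := ha
  obtain ⟨wb, hwb, rfl⟩ := hb
  exact ⟨wa * wb, by simp [FreeMonoid.length_mul, hwa, hwb], by simp⟩

namespace YBProof

variable {X : Type*} (r : X × X → X × X)

/-- Left action `λ_x`. -/
def L (x : X) : X → X := fun y => (r (x, y)).1

/-- One rewriting step on lists. -/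
def stepL (w w' : List X) : Prop :=
  ∃ u x y v, w = u ++ x :: y :: v ∧ w' = u ++ (r (x, y)).1 :: (r (x, y)).2 :: v

/-- The equivalence generated by rewriting steps. -/
def E1 : List X → List X → Prop := Relation.EqvGen (stepL r)

lemma stepL_append_left (w : List X) {u v : List X} (h : stepL r u v) :
    stepL r (w ++ u) (w ++ v) := by
  obtain ⟨u₀, x, y, v₀, rfl, rfl⟩ := h
  exact ⟨w ++ u₀, x, y, v₀, by simp, by simp⟩

lemma stepL_append_right (w : List X) {u v : List X} (h : stepL r u v) :
    stepL r (u ++ w) (v ++ w) := by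
  obtain ⟨u₀, x, y, v₀, rfl, rfl⟩ := h
  exact ⟨u₀, x, y, v₀ ++ w, by simp, by simp⟩

lemma E1_append_left (w : List X) {u v : List X} (h : E1 r u v) :
    E1 r (w ++ u) (w ++ v) := by
  induction h with
  | rel a b hab => exact Relation.EqvGen.rel _ _ (stepL_append_left r w hab)
  | refl a => exact Relation.EqvGen.refl _
  | symm a b _ ih => exact Relation.EqvGen.symm _ _ ih
  | trans a b c _ _ ih1 ih2 => exact Relation.EqvGen.trans _ _ _ ih1 ih2

lemma E1_append_right (w : List X) {u v : List X} (h : E1 r u v) :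
    E1 r (u ++ w) (v ++ w) := by
  induction h with
  | rel a b hab => exact Relation.EqvGen.rel _ _ (stepL_append_right r w hab)
  | refl a => exact Relation.EqvGen.refl _
  | symm a b _ ih => exact Relation.EqvGen.symm _ _ ih
  | trans a b c _ _ ih1 ih2 => exact Relation.EqvGen.trans _ _ _ ih1 ih2

lemma E1_append {u v u' v' : List X} (h : E1 r u v) (h' : E1 r u' v') :
    E1 r (u ++ u') (v ++ v') :=
  Relation.EqvGen.trans _ _ _ (E1_append_right r u' h) (E1_append_left r v h')

/-- The congruence on the free monoid given by `E1` on underlying lists. -/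
def myCon : Con (FreeMonoid X) where
  r a b := E1 r (FreeMonoid.toList a) (FreeMonoid.toList b)
  iseqv := ⟨fun _ => Relation.EqvGen.refl _, fun h => Relation.EqvGen.symm _ _ h,
    fun h h' => Relation.EqvGen.trans _ _ _ h h'⟩
  mul' {a b c d} h h' := by
    simpa [FreeMonoid.toList_mul] using E1_append r h h'

lemma E1_ofList {la lb : List X} (h : E1 r la lb) :
    (ybCon r) (FreeMonoid.ofList la) (FreeMonoid.ofList lb) := by
  induction h with
  | rel a' b' hab =>
    obtain ⟨u, x, y, v, rfl, rfl⟩ := hab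
    have ha' : FreeMonoid.ofList (u ++ x :: y :: v)
        = FreeMonoid.ofList u * (FreeMonoid.of x * FreeMonoid.of y) *
          FreeMonoid.ofList v := by
      show FreeMonoid.ofList (u ++ x :: y :: v) = FreeMonoid.ofList ((u ++ [x, y]) ++ v)
      exact congrArg FreeMonoid.ofList (by simp)
    have hb' : FreeMonoid.ofList (u ++ (r (x, y)).1 :: (r (x, y)).2 :: v)
        = FreeMonoid.ofList u *
          (FreeMonoid.of (r (x, y)).1 * FreeMonoid.of (r (x, y)).2) *
          FreeMonoid.ofList v := by
      show _ = FreeMonoid.ofList ((u ++ [(r (x, y)).1, (r (x, y)).2]) ++ v)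
      exact congrArg FreeMonoid.ofList (by simp)
    rw [ha', hb']
    exact (ybCon r).mul ((ybCon r).mul ((ybCon r).refl _)
      (ConGen.Rel.of _ _ ⟨x, y, rfl, rfl⟩)) ((ybCon r).refl _)
  | refl a' => exact (ybCon r).refl _
  | symm a' b' _ ih => exact (ybCon r).symm ih
  | trans a' b' c' _ _ ih1 ih2 => exact (ybCon r).trans ih1 ih2

lemma ybCon_eq : ybCon r = myCon r := by
  apply le_antisymm
  · apply Con.conGen_le.mpr
    rintro a b ⟨x, y, rfl, rfl⟩
    exact Relation.EqvGen.rel _ _ ⟨[], x, y, [], rfl, rfl⟩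
  · rintro a b (h : E1 r _ _)
    exact E1_ofList r h

lemma ybCon_iff {a b : FreeMonoid X} :
    (ybCon r).mk' a = (ybCon r).mk' b ↔
      E1 r (FreeMonoid.toList a) (FreeMonoid.toList b) := by
  constructor
  · intro h
    have h2 : (ybCon r) a b := Con.eq _ |>.mp h
    rw [ybCon_eq r] at h2
    exact h2
  · intro h
    exact (Con.eq _).mpr (by rw [ybCon_eq r]; exact h)

section Guitar

lemma inv_pair (hinv : Function.Involutive r) (x y : X) : r ((r (x, y)).1, (r (x, y)).2) = (x, y) := by
  have := hinv (x, y); simpa using this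

lemma inv1 (hinv : Function.Involutive r) (x y : X) : L r (r (x, y)).1 (r (x, y)).2 = x := by
  have := inv_pair r hinv x y
  simpa [L] using congrArg Prod.fst this

lemma ybe1 (hbraid : rOne r ∘ rTwo r ∘ rOne r = rTwo r ∘ rOne r ∘ rTwo r) (x y : X) : L r (r (x, y)).1 ∘ L r (r (x, y)).2 = L r x ∘ L r y := by
  funext z
  have h1 := congrArg (fun p => p.1) (congrFun hbraid (x, y, z))
  simpa [rOne, rTwo, L, Function.comp] using h1

/-- The bijection `λ_x`. -/
noncomputable def eL (hndl : ∀ x : X, Function.Bijective fun y => (r (x, y)).1) (x : X) : X ≃ X := Equiv.ofBijective _ (hndl x)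

lemma eL_apply (hndl : ∀ x : X, Function.Bijective fun y => (r (x, y)).1) (x y : X) : eL r hndl x y = L r x y := rfl

/-- The guitar map. -/
def phi : List X → List X
  | [] => []
  | x :: t => x :: (phi t).map (L r x)

@[simp] lemma phi_nil : phi r ([] : List X) = [] := rfl

@[simp] lemma phi_cons (x : X) (t : List X) :
    phi r (x :: t) = x :: (phi r t).map (L r x) := rfl

@[simp] lemma phi_length (w : List X) : (phi r w).length = w.length := by
  induction w with
  | nil => rfl
  | cons x t ih => simp [ih]

lemma phi_injective (hndl : ∀ x : X, Function.Bijective fun y => (r (x, y)).1) : Function.Injective (phi r) := by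
  intro a
  induction a with
  | nil =>
    intro b h
    cases b with
    | nil => rfl
    | cons y s => simp [phi] at h
  | cons x t ih =>
    intro b h
    cases b with
    | nil => simp [phi] at h
    | cons y s =>
      simp only [phi_cons, List.cons.injEq] at h
      obtain ⟨rfl, h2⟩ := h
      have : phi r t = phi r s :=
        List.map_injective_iff.mpr (eL r hndl x).injective h2
      rw [ih this]

lemma L_comp_symm (hndl : ∀ x : X, Function.Bijective fun y => (r (x, y)).1) (x : X) : L r x ∘ (eL r hndl x).symm = id := by
  funext z; exact (eL r hndl x).apply_symm_apply z

lemma phi_surjective (hndl : ∀ x : X, Function.Bijective fun y => (r (x, y)).1) : Function.Surjective (phi r) := by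
  have key : ∀ (m : ℕ) (l : List X), l.length = m → ∃ t, phi r t = l := by
    intro m
    induction m with
    | zero =>
      intro l hl
      exact ⟨[], by simpa using (List.length_eq_zero_iff.mp hl).symm⟩
    | succ m ih =>
      intro l hl
      cases l with
      | nil => simp at hl
      | cons y s =>
        obtain ⟨t, ht⟩ := ih (s.map (eL r hndl y).symm) (by simpa using hl)
        refine ⟨y :: t, ?_⟩
        simp only [phi_cons, ht, List.map_map, L_comp_symm r hndl, List.map_id]
  intro l; exact key l.length l rfl

/-- Inverse of the guitar map. -/
noncomputable def psi : List X → List X := Function.invFun (phi r)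

lemma phi_psi (hndl : ∀ x : X, Function.Bijective fun y => (r (x, y)).1) (l : List X) : phi r (psi r l) = l :=
  Function.rightInverse_invFun (phi_surjective r hndl) l

lemma psi_phi (hndl : ∀ x : X, Function.Bijective fun y => (r (x, y)).1) (l : List X) : psi r (phi r l) = l :=
  Function.leftInverse_invFun (phi_injective r hndl) l

lemma psi_length (hndl : ∀ x : X, Function.Bijective fun y => (r (x, y)).1) (l : List X) : (psi r l).length = l.length := by
  conv_rhs => rw [← phi_psi r hndl l]
  rw [phi_length]

lemma psi_cons (hndl : ∀ x : X, Function.Bijective fun y => (r (x, y)).1) (y : X) (s : List X) :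
    psi r (y :: s) = y :: psi r (s.map (eL r hndl y).symm) := by
  apply phi_injective r hndl
  rw [phi_psi r hndl, phi_cons, phi_psi r hndl, List.map_map,
    L_comp_symm r hndl, List.map_id]

/-- Forward direction: a rewriting step becomes an adjacent swap under `phi`. -/
lemma phi_step (hinv : Function.Involutive r) (hbraid : rOne r ∘ rTwo r ∘ rOne r = rTwo r ∘ rOne r ∘ rTwo r) {w w' : List X} (h : stepL r w w') : (phi r w).Perm (phi r w') := by
  obtain ⟨u, x, y, v, rfl, rfl⟩ := h
  induction u with
  | nil =>
    simp only [List.nil_append, phi_cons, List.map_map, List.map_cons]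
    rw [inv1 r hinv, ybe1 r hbraid]
    exact List.Perm.swap _ _ _
  | cons a u ih =>
    simp only [List.cons_append, phi_cons]
    exact (ih.map _).cons a

lemma phi_E1 (hinv : Function.Involutive r) (hbraid : rOne r ∘ rTwo r ∘ rOne r = rTwo r ∘ rOne r ∘ rTwo r) {w w' : List X} (h : E1 r w w') : (phi r w).Perm (phi r w') := by
  induction h with
  | rel a b hab => exact phi_step r hinv hbraid hab
  | refl a => exact List.Perm.refl _
  | symm a b _ ih => exact ih.symm
  | trans a b c _ _ ih1 ih2 => exact ih1.trans ih2

lemma E1_cons {t t' : List X} (a : X) (h : E1 r t t') : E1 r (a :: t) (a :: t') := by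
  simpa using E1_append_left r [a] h

lemma psi_swap (hndl : ∀ x : X, Function.Bijective fun y => (r (x, y)).1) (hinv : Function.Involutive r) (hbraid : rOne r ∘ rTwo r ∘ rOne r = rTwo r ∘ rOne r ∘ rTwo r) (a b : X) (m : List X) :
    E1 r (psi r (b :: a :: m)) (psi r (a :: b :: m)) := by
  set p : X := (eL r hndl a).symm b with hp
  have hb : (r (a, p)).1 = b := (eL r hndl a).apply_symm_apply b
  set c : X := (r (a, p)).2 with hc
  have hca : L r b c = a := by
    have := inv1 r hinv a p
    rwa [hb] at this
  have hcomp : L r b ∘ L r c = L r a ∘ L r p := by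
    have := ybe1 r hbraid a p
    rwa [hb] at this
  have hcb : (eL r hndl b).symm a = c :=
    (eL r hndl b).symm_apply_eq.mpr hca.symm
  have hinvcomp : ((eL r hndl c).symm ∘ (eL r hndl b).symm : X → X)
      = (eL r hndl p).symm ∘ (eL r hndl a).symm := by
    funext z
    set w : X := (eL r hndl p).symm ((eL r hndl a).symm z) with hw
    have h1 : L r a (L r p w) = z := by
      show eL r hndl a (eL r hndl p w) = z
      rw [hw, Equiv.apply_symm_apply, Equiv.apply_symm_apply]
    have h2 : L r b (L r c w) = z := by
      have h3 := congrFun hcomp w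
      simp only [Function.comp_apply] at h3
      rw [h3]; exact h1
    have h4 : (eL r hndl b).symm z = L r c w :=
      (eL r hndl b).symm_apply_eq.mpr h2.symm
    show (eL r hndl c).symm ((eL r hndl b).symm z) = w
    rw [h4]
    exact (eL r hndl c).symm_apply_apply w
  have h1 : psi r (a :: b :: m) = a :: p :: psi r
      (m.map ((eL r hndl p).symm ∘ (eL r hndl a).symm)) := by
    rw [psi_cons r hndl, List.map_cons, psi_cons r hndl, List.map_map, ← hp]
  have h2 : psi r (b :: a :: m) = b :: c :: psi r
      (m.map ((eL r hndl p).symm ∘ (eL r hndl a).symm)) := by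
    rw [psi_cons r hndl, List.map_cons, psi_cons r hndl, List.map_map, hcb, hinvcomp]
  rw [h1, h2]
  refine Relation.EqvGen.symm _ _ (Relation.EqvGen.rel _ _ ?_)
  refine ⟨[], a, p, _, (List.nil_append _).symm, ?_⟩
  rw [List.nil_append, hb, ← hc]

lemma psi_perm_map (hndl : ∀ x : X, Function.Bijective fun y => (r (x, y)).1) (hinv : Function.Involutive r) (hbraid : rOne r ∘ rTwo r ∘ rOne r = rTwo r ∘ rOne r ∘ rTwo r) {l1 l2 : List X} (h : l1.Perm l2) :
    ∀ g : X ≃ X, E1 r (psi r (l1.map g)) (psi r (l2.map g)) := by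
  induction h with
  | nil => exact fun g => Relation.EqvGen.refl _
  | cons x h ih =>
    intro g
    simp only [List.map_cons]
    rw [psi_cons r hndl, psi_cons r hndl, List.map_map, List.map_map]
    have hh := ih (g.trans (eL r hndl (g x)).symm)
    have hg : ((eL r hndl (g x)).symm ∘ g : X → X)
        = ⇑(g.trans (eL r hndl (g x)).symm) := rfl
    rw [hg]
    exact E1_cons r _ hh
  | swap x y l =>
    intro g
    simp only [List.map_cons]
    exact psi_swap r hndl hinv hbraid (g x) (g y) (l.map g)
  | trans h1 h2 ih1 ih2 =>
    intro g
    exact Relation.EqvGen.trans _ _ _ (ih1 g) (ih2 g)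

lemma psi_perm (hndl : ∀ x : X, Function.Bijective fun y => (r (x, y)).1) (hinv : Function.Involutive r) (hbraid : rOne r ∘ rTwo r ∘ rOne r = rTwo r ∘ rOne r ∘ rTwo r) {l1 l2 : List X} (h : l1.Perm l2) :
    E1 r (psi r l1) (psi r l2) := by
  have := psi_perm_map r hndl hinv hbraid h (Equiv.refl X)
  simpa using this

/-- The map from multisets to the structure monoid. -/
noncomputable def H0 (hndl : ∀ x : X, Function.Bijective fun y => (r (x, y)).1) (hinv : Function.Involutive r) (hbraid : rOne r ∘ rTwo r ∘ rOne r = rTwo r ∘ rOne r ∘ rTwo r) : Multiset X → (ybCon r).Quotient :=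
  Quotient.lift (fun l : List X => (ybCon r).mk' (FreeMonoid.ofList (psi r l)))
    (by
      intro l l' (hll : l.Perm l')
      exact (ybCon_iff r).mpr (psi_perm r hndl hinv hbraid hll))

lemma H0_coe (hndl : ∀ x : X, Function.Bijective fun y => (r (x, y)).1) (hinv : Function.Involutive r) (hbraid : rOne r ∘ rTwo r ∘ rOne r = rTwo r ∘ rOne r ∘ rTwo r) (l : List X) :
    H0 r hndl hinv hbraid (↑l : Multiset X)
      = (ybCon r).mk' (FreeMonoid.ofList (psi r l)) := rfl

lemma H0_deg (hndl : ∀ x : X, Function.Bijective fun y => (r (x, y)).1) (hinv : Function.Involutive r) (hbraid : rOne r ∘ rTwo r ∘ rOne r = rTwo r ∘ rOne r ∘ rTwo r) (μ : Multiset X) :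
    ybDeg r (H0 r hndl hinv hbraid μ) (Multiset.card μ) := by
  induction μ using Quotient.ind with
  | _ l =>
    refine ⟨FreeMonoid.ofList (psi r l), ?_, rfl⟩
    show (psi r l).length = _
    rw [psi_length r hndl]
    rfl

lemma H0_injective (hndl : ∀ x : X, Function.Bijective fun y => (r (x, y)).1) (hinv : Function.Involutive r) (hbraid : rOne r ∘ rTwo r ∘ rOne r = rTwo r ∘ rOne r ∘ rTwo r) : Function.Injective (H0 r hndl hinv hbraid) := by
  intro μ ν h
  induction μ using Quotient.ind with
  | _ l =>
    induction ν using Quotient.ind with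
    | _ l' =>
      have h' : E1 r (psi r l) (psi r l') := (ybCon_iff r).mp h
      have h2 := phi_E1 r hinv hbraid h'
      rw [phi_psi r hndl, phi_psi r hndl] at h2
      exact Quotient.sound h2

/-- The degree-`m` part of `S(X,r)` is in bijection with multisets of size `m`. -/
noncomputable def symEquiv (hndl : ∀ x : X, Function.Bijective fun y => (r (x, y)).1) (hinv : Function.Involutive r) (hbraid : rOne r ∘ rTwo r ∘ rOne r = rTwo r ∘ rOne r ∘ rTwo r) (m : ℕ) :
    Sym X m ≃ {s : (ybCon r).Quotient // ybDeg r s m} := by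
  refine Equiv.ofBijective
    (fun μ => ⟨H0 r hndl hinv hbraid μ.1, by obtain ⟨ms, hms⟩ := μ; subst hms; exact H0_deg r hndl hinv hbraid ms⟩) ⟨?_, ?_⟩
  · intro μ ν h
    exact Subtype.ext (H0_injective r hndl hinv hbraid (congrArg Subtype.val h))
  · rintro ⟨s, w, hw, rfl⟩
    refine ⟨⟨(↑(phi r (FreeMonoid.toList w)) : Multiset X), ?_⟩, ?_⟩
    · rw [Multiset.coe_card, phi_length]
      exact hw
    · apply Subtype.ext
      show H0 r hndl hinv hbraid (↑(phi r (FreeMonoid.toList w))) = _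
      rw [H0_coe, psi_phi r hndl]
      rfl

end Guitar

end YBProof

open YBProof in
/-- Theorem: the `d`-Veronese subalgebra `A^(d)` of the Yang-Baxter algebra of a
finite solution of order `n` is quadratic with `N = C(n+d-1,d)` one-generators
(a basis of `A_d`, identified with the degree-`d` part of `S(X,r)`), and any set of
linearly independent quadratic defining relations — i.e. any basis of the kernel of
the multiplication map `A_d ⊗ A_d → A_{2d}` — has cardinality
`N² − C(n+2d-1, n-1)`. -/
theorem stmt_19 {X : Type*} [Fintype X] (k : Type*) [Field k]
    (n d : ℕ) (hn : Fintype.card X = n) (hd : 2 ≤ d)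
    (r : X × X → X × X)
    (hbij : Function.Bijective r)
    (hndl : ∀ x : X, Function.Bijective fun y => (r (x, y)).1)
    (hndr : ∀ y : X, Function.Bijective fun x => (r (x, y)).2)
    (hinv : Function.Involutive r)
    (hbraid : rOne r ∘ rTwo r ∘ rOne r = rTwo r ∘ rOne r ∘ rTwo r) :
    Nat.card {s : (ybCon r).Quotient // ybDeg r s d} = (n + d - 1).choose d ∧
    Module.finrank k
      (LinearMap.ker
        ((Finsupp.lift ({s : (ybCon r).Quotient // ybDeg r s (d + d)} →₀ k) k
            ({s : (ybCon r).Quotient // ybDeg r s d} ×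
             {s : (ybCon r).Quotient // ybDeg r s d}))
          (fun p => Finsupp.single ⟨p.1.1 * p.2.1, ybDeg_mul r p.1.2 p.2.2⟩ 1))) =
      ((n + d - 1).choose d) ^ 2 - (n + 2 * d - 1).choose (n - 1) := by
  classical
  have e1 := symEquiv r hndl hinv hbraid d
  have e2 := symEquiv r hndl hinv hbraid (d + d)
  haveI : Fintype {s : (ybCon r).Quotient // ybDeg r s d} := Fintype.ofEquiv _ e1
  haveI : Fintype {s : (ybCon r).Quotient // ybDeg r s (d + d)} := Fintype.ofEquiv _ e2
  have cardAd : Fintype.card {s : (ybCon r).Quotient // ybDeg r s d}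
      = (n + d - 1).choose d := by
    rw [← Fintype.card_congr e1, Sym.card_sym_eq_choose, hn]
  have cardA2 : Fintype.card {s : (ybCon r).Quotient // ybDeg r s (d + d)}
      = (n + (d + d) - 1).choose (d + d) := by
    rw [← Fintype.card_congr e2, Sym.card_sym_eq_choose, hn]
  constructor
  · rw [Nat.card_eq_fintype_card, cardAd]
  · set F := ((Finsupp.lift ({s : (ybCon r).Quotient // ybDeg r s (d + d)} →₀ k) k
        ({s : (ybCon r).Quotient // ybDeg r s d} ×
         {s : (ybCon r).Quotient // ybDeg r s d}))
        (fun p => Finsupp.single ⟨p.1.1 * p.2.1, ybDeg_mul r p.1.2 p.2.2⟩ 1)) with hF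
    have hsingle : ∀ t : {s : (ybCon r).Quotient // ybDeg r s (d + d)},
        Finsupp.single t (1 : k) ∈ LinearMap.range F := by
      rintro ⟨s, hs⟩
      obtain ⟨w, hw, rfl⟩ := hs
      set w1 : FreeMonoid X := FreeMonoid.ofList ((FreeMonoid.toList w).take d) with hw1
      set w2 : FreeMonoid X := FreeMonoid.ofList ((FreeMonoid.toList w).drop d) with hw2
      have hlw : (FreeMonoid.toList w).length = d + d := hw
      have hl1 : FreeMonoid.length w1 = d := by
        show ((FreeMonoid.toList w).take d).length = d
        rw [List.length_take, hlw]
        omega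
      have hl2 : FreeMonoid.length w2 = d := by
        show ((FreeMonoid.toList w).drop d).length = d
        rw [List.length_drop, hlw]
        omega
      have hw12 : w1 * w2 = w := by
        rw [hw1, hw2, ← FreeMonoid.ofList_append, List.take_append_drop]
        rfl
      refine ⟨Finsupp.single
        (⟨(ybCon r).mk' w1, ⟨w1, hl1, rfl⟩⟩, ⟨(ybCon r).mk' w2, ⟨w2, hl2, rfl⟩⟩) 1, ?_⟩
      rw [hF]
      rw [Finsupp.lift_apply, Finsupp.sum_single_index (by simp), one_smul]
      congr 1
      apply Subtype.ext
      show (ybCon r).mk' w1 * (ybCon r).mk' w2 = (ybCon r).mk' w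
      rw [← map_mul, hw12]
    have hrange : LinearMap.range F = ⊤ := by
      rw [eq_top_iff, ← Module.Basis.span_eq
        (Finsupp.basisSingleOne (R := k)
          (ι := {s : (ybCon r).Quotient // ybDeg r s (d + d)}))]
      refine Submodule.span_le.mpr ?_
      rintro _ ⟨t, rfl⟩
      simpa [Finsupp.coe_basisSingleOne] using hsingle t
    have hrn := LinearMap.finrank_range_add_finrank_ker F
    rw [hrange, finrank_top, Module.finrank_finsupp_self, Module.finrank_finsupp_self,
      Fintype.card_prod, cardAd, cardA2] at hrn
    have hker : Module.finrank k (LinearMap.ker F)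
        = (n + d - 1).choose d * (n + d - 1).choose d
          - (n + (d + d) - 1).choose (d + d) := by omega
    rw [hker, ← pow_two]
    rcases Nat.eq_zero_or_pos n with hn0 | hn1
    · subst hn0
      have h1 : (0 + d - 1).choose d = 0 := Nat.choose_eq_zero_of_lt (by omega)
      rw [h1]
      simp
    · congr 1
      have hm : n + 2 * d - 1 = n + (d + d) - 1 := by omega
      rw [hm]
      have hk : d + d ≤ n + (d + d) - 1 := by omega
      have h2 : n - 1 = (n + (d + d) - 1) - (d + d) := by omega
      rw [h2, Nat.choose_symm hk]
end
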